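/- arXiv:2210.07939 — 2 statements merged into one kernel-verified Lean document; each statement's English description precedes it below -/
import Mathlib

section
/- Let q > 0, κ > 0 and N > 0 be real numbers, and define f : (0,∞) → ℝ by f(h) = κ h^q + √(2/π) (N h)^{-1/2}. Then f attains its global minimum on (0,∞) at the unique point h_opt = (1/(2π))^{1/(2q+1)} (qκ)^{-2/(2q+1)} N^{-1/(2q+1)}; that is, f(h_opt) ≤ f(h) for all h > 0, with strict inequality for h ≠ h_opt. Moreover, the corresponding optimal sampling time T_opt = N · h_opt equals (1/(2π))^{1/(2q+1)} (qκ)^{-2/(2q+1)} N^{2q/(2q+1)}. -/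
/-!
With `c = √(2/π) N^(-1/2)` the error model is `f h = κ h^q + c h^(-1/2)`. A sum
`a x^q + b x^(-p)` has derivative `x^(-p-1) (a q x^(q+p) - p b)` on `(0, ∞)`, whose sign is that
of `x - x₀` for the unique `x₀` with `a q x₀^(q+p) = p b`; so `x₀` is the strict global minimiser.
For the error model `x₀ = h_opt`, because `h_opt^(q+1/2) = √(1/(2π)) (qκ)⁻¹ N^(-1/2) = c / (2qκ)`.
-/

open Real Set

section PowerSum

variable {a b p q : ℝ}

theorem hasDerivAt_rpow_add_rpow_neg {x : ℝ} (hx : 0 < x) :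
    HasDerivAt (fun y => a * y ^ q + b * y ^ (-p))
      (x ^ (-p - 1) * (a * q * x ^ (q + p) - p * b)) x := by
  have hq : HasDerivAt (fun y : ℝ => y ^ q) (q * x ^ (q - 1)) x :=
    hasDerivAt_rpow_const (Or.inl hx.ne')
  have hp : HasDerivAt (fun y : ℝ => y ^ (-p)) (-p * x ^ (-p - 1)) x :=
    hasDerivAt_rpow_const (Or.inl hx.ne')
  refine ((hq.const_mul a).add (hp.const_mul b)).congr_deriv ?_
  have : x ^ (q - 1) = x ^ (-p - 1) * x ^ (q + p) := by
    rw [← rpow_add hx]; ring_nf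
  rw [this]; ring

variable {x₀ : ℝ}

theorem strictAntiOn_rpow_add_rpow_neg (haq : 0 < a * q) (hqp : 0 < q + p)
    (hcrit : a * q * x₀ ^ (q + p) = p * b) :
    StrictAntiOn (fun y => a * y ^ q + b * y ^ (-p)) (Ioc 0 x₀) := by
  refine strictAntiOn_of_deriv_neg (convex_Ioc 0 x₀)
    (fun x hx => (hasDerivAt_rpow_add_rpow_neg hx.1).continuousAt.continuousWithinAt) ?_
  rw [interior_Ioc]
  intro x ⟨hx, hxx₀⟩
  rw [(hasDerivAt_rpow_add_rpow_neg hx).deriv]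
  have : a * q * x ^ (q + p) < p * b :=
    hcrit ▸ mul_lt_mul_of_pos_left (rpow_lt_rpow hx.le hxx₀ hqp) haq
  exact mul_neg_of_pos_of_neg (rpow_pos_of_pos hx _) (by linarith)

theorem strictMonoOn_rpow_add_rpow_neg (haq : 0 < a * q) (hqp : 0 < q + p) (hx₀ : 0 < x₀)
    (hcrit : a * q * x₀ ^ (q + p) = p * b) :
    StrictMonoOn (fun y => a * y ^ q + b * y ^ (-p)) (Ici x₀) := by
  refine strictMonoOn_of_deriv_pos (convex_Ici x₀)
    (fun x hx => (hasDerivAt_rpow_add_rpow_neg (hx₀.trans_le hx)).continuousAt.continuousWithinAt)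
    ?_
  rw [interior_Ici]
  intro x (hx₀x : x₀ < x)
  have hx := hx₀.trans hx₀x
  rw [(hasDerivAt_rpow_add_rpow_neg hx).deriv]
  have : p * b < a * q * x ^ (q + p) :=
    hcrit ▸ mul_lt_mul_of_pos_left (rpow_lt_rpow hx₀.le hx₀x hqp) haq
  exact mul_pos (rpow_pos_of_pos hx _) (by linarith)

theorem rpow_add_rpow_neg_lt_of_ne (haq : 0 < a * q) (hqp : 0 < q + p) (hx₀ : 0 < x₀)
    (hcrit : a * q * x₀ ^ (q + p) = p * b) {x : ℝ} (hx : 0 < x) (hne : x ≠ x₀) :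
    a * x₀ ^ q + b * x₀ ^ (-p) < a * x ^ q + b * x ^ (-p) := by
  rcases hne.lt_or_gt with hlt | hgt
  · exact strictAntiOn_rpow_add_rpow_neg haq hqp hcrit ⟨hx, hlt.le⟩ ⟨hx₀, le_rfl⟩ hlt
  · exact strictMonoOn_rpow_add_rpow_neg haq hqp hx₀ hcrit self_mem_Ici hgt.le hgt

end PowerSum

theorem one_div_two_mul_pi_rpow_half : (1 / (2 * π)) ^ (1 / 2 : ℝ) = √(2 / π) / 2 := by
  rw [← sqrt_eq_rpow, show 1 / (2 * π) = 2 / π / 2 ^ 2 by field_simp,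
    sqrt_div (by positivity), sqrt_sq zero_le_two]

theorem optimal_timestep_error_model (q κ N : ℝ) (hq : 0 < q) (hκ : 0 < κ) (hN : 0 < N)
    (f : ℝ → ℝ)
    (hf : ∀ h : ℝ, f h = κ * h ^ q + Real.sqrt (2 / Real.pi) * (N * h) ^ (-(1 / 2) : ℝ))
    (hopt : ℝ)
    (hhopt : hopt = (1 / (2 * Real.pi)) ^ ((1 / (2 * q + 1)) : ℝ)
        * (q * κ) ^ ((-(2 / (2 * q + 1))) : ℝ) * N ^ ((-(1 / (2 * q + 1))) : ℝ)) :
    (∀ h : ℝ, 0 < h → f hopt ≤ f h) ∧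
    (∀ h : ℝ, 0 < h → h ≠ hopt → f hopt < f h) ∧
    N * hopt = (1 / (2 * Real.pi)) ^ ((1 / (2 * q + 1)) : ℝ)
        * (q * κ) ^ ((-(2 / (2 * q + 1))) : ℝ) * N ^ ((2 * q / (2 * q + 1)) : ℝ) := by
  set c := √(2 / π) * N ^ (-(1 / 2) : ℝ) with hc
  have hopt_pos : 0 < hopt := hhopt ▸ by positivity
  have hf' : ∀ h, 0 < h → f h = κ * h ^ q + c * h ^ (-(1 / 2) : ℝ) := fun h hh => by
    rw [hf, mul_rpow hN.le hh.le, hc]; ring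
  have hcrit : κ * q * hopt ^ (q + 1 / 2) = 1 / 2 * c := by
    have : hopt ^ (q + 1 / 2) = (1 / (2 * π)) ^ (1 / 2 : ℝ) * (q * κ)⁻¹ * N ^ (-(1 / 2) : ℝ) := by
      rw [hhopt, mul_rpow (by positivity) (by positivity), mul_rpow (by positivity) (by positivity),
        ← rpow_mul (by positivity), ← rpow_mul (by positivity), ← rpow_mul hN.le, ← rpow_neg_one]
      congr 3 <;> field_simp
    rw [this, one_div_two_mul_pi_rpow_half, hc]
    field_simp
  have hmin : ∀ h, 0 < h → h ≠ hopt → f hopt < f h := fun h hh hne => by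
    rw [hf' h hh, hf' hopt hopt_pos]
    exact rpow_add_rpow_neg_lt_of_ne (by positivity) (by linarith) hopt_pos hcrit hh hne
  refine ⟨fun h hh => ?_, hmin, ?_⟩
  · rcases eq_or_ne h hopt with rfl | hne
    · rfl
    · exact (hmin h hh hne).le
  · have hexp : 1 + -(1 / (2 * q + 1)) = 2 * q / (2 * q + 1) := by field_simp; ring
    rw [hhopt, mul_left_comm, ← rpow_one_add' hN.le (by rw [hexp]; positivity), hexp]
end

section
/- Let d ≥ 1 and N ≥ 1 be natural numbers, let K be a natural number, let G_max ≥ 0, let v : Fin N → (Fin d → ℝ) be a family of vectors (local truncation errors), and let φ : Fin N → Fin N → ((Fin d → ℝ) → ℝ) be a family of maps such that for all n, η: (i) |φ(η, n)(v(n))| ≤ G_max · ‖v(n)‖, where ‖·‖ is the sup norm on Fin d → ℝ; (ii) φ(η, n)(v(n)) = 0 whenever η < n or η ≥ n + K. Then |(1/N) · Σ_{n} Σ_{η} φ(η, n)(v(n))| ≤ K · G_max · max_{n} ‖v(n)‖, where both sums run over Fin N and the maximum is over n ∈ Fin N. -/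
/-! Causality and decorrelation leave at most `K` nonzero terms in each inner sum, each bounded by
`Gmax * max ‖v n‖`; averaging over `n` preserves that bound. -/

open Finset

theorem norm_sum_le_card_mul_of_eq_zero_of_notMem {ι E : Type*} [Fintype ι]
    [SeminormedAddCommGroup E] {f : ι → E} {S : Finset ι} {B : ℝ}
    (hzero : ∀ i ∉ S, f i = 0) (hle : ∀ i ∈ S, ‖f i‖ ≤ B) :
    ‖∑ i, f i‖ ≤ #S * B := by
  rw [← sum_subset (subset_univ S) fun i _ hi => hzero i hi]
  calc ‖∑ i ∈ S, f i‖ ≤ ∑ i ∈ S, ‖f i‖ := norm_sum_le _ _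
    _ ≤ #S • B := sum_le_card_nsmul _ _ _ hle
    _ = #S * B := nsmul_eq_mul _ _

theorem Fin.card_filter_mem_Ico_le (N a K : ℕ) :
    #{η : Fin N | (η : ℕ) ∈ Ico a (a + K)} ≤ K :=
  calc #{η : Fin N | (η : ℕ) ∈ Ico a (a + K)}
      ≤ #(Ico a (a + K)) :=
        card_le_card_of_injOn Fin.val (fun _ hη => (mem_filter.mp hη).2)
          Fin.val_injective.injOn
    _ = K := by simp

theorem abs_mean_le_of_forall_abs_le {ι : Type*} [Fintype ι] [Nonempty ι] {g : ι → ℝ} {B : ℝ}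
    (hle : ∀ i, |g i| ≤ B) :
    |(1 / (Fintype.card ι : ℝ)) * ∑ i, g i| ≤ B := by
  have hcard : (0 : ℝ) < Fintype.card ι := Nat.cast_pos.mpr Fintype.card_pos
  rw [abs_mul, abs_of_pos (one_div_pos.mpr hcard), one_div_mul_eq_div,
    div_le_iff₀ hcard, mul_comm]
  calc |∑ i, g i| ≤ ∑ i, |g i| := abs_sum_le_sum_abs _ _
    _ ≤ ∑ _i : ι, B := sum_le_sum fun i _ => hle i
    _ = Fintype.card ι * B := by rw [sum_const, card_univ, nsmul_eq_mul]

theorem global_error_bounded_by_local_truncation_error_general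
    (d N : ℕ) (hN : 1 ≤ N) (K : ℕ) (Gmax : ℝ) (hG : 0 ≤ Gmax)
    (v : Fin N → (Fin d → ℝ))
    (φ : Fin N → Fin N → ((Fin d → ℝ) → ℝ))
    (hbound : ∀ n η : Fin N, |φ η n (v n)| ≤ Gmax * ‖v n‖)
    (hsupp : ∀ n η : Fin N, ((η : ℕ) < (n : ℕ) ∨ (n : ℕ) + K ≤ (η : ℕ)) → φ η n (v n) = 0) :
    |(1 / (N : ℝ)) * ∑ n : Fin N, ∑ η : Fin N, φ η n (v n)|
      ≤ (K : ℝ) * Gmax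
        * (Finset.univ.sup' (Finset.univ_nonempty_iff.mpr ⟨⟨0, hN⟩⟩) fun n : Fin N => ‖v n‖) := by
  set M := Finset.univ.sup' (Finset.univ_nonempty_iff.mpr ⟨⟨0, hN⟩⟩) fun n : Fin N => ‖v n‖
  have hM : ∀ n, ‖v n‖ ≤ M := fun n => le_sup' (fun n : Fin N => ‖v n‖) (mem_univ n)
  have hwindow : ∀ n : Fin N, |∑ η : Fin N, φ η n (v n)| ≤ K * (Gmax * M) := by
    intro n
    calc |∑ η : Fin N, φ η n (v n)|
        ≤ #{η : Fin N | (η : ℕ) ∈ Ico (n : ℕ) (n + K)} * (Gmax * M) :=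
          norm_sum_le_card_mul_of_eq_zero_of_notMem
            (fun η hη => hsupp n η <| by
              simpa only [mem_filter, mem_univ, true_and, mem_Ico, not_and_or, not_le, not_lt]
                using hη)
            (fun η _ => (hbound n η).trans (mul_le_mul_of_nonneg_left (hM n) hG))
      _ ≤ K * (Gmax * M) := by
          gcongr
          · exact mul_nonneg hG ((norm_nonneg _).trans (hM n))
          · exact_mod_cast Fin.card_filter_mem_Ico_le N n K
  have : Nonempty (Fin N) := ⟨⟨0, hN⟩⟩
  simpa [mul_assoc] using abs_mean_le_of_forall_abs_le hwindow

theorem global_error_bounded_by_local_truncation_error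
    (d N : ℕ) (hd : 1 ≤ d) (hN : 1 ≤ N) (K : ℕ) (Gmax : ℝ) (hG : 0 ≤ Gmax)
    (v : Fin N → (Fin d → ℝ))
    (φ : Fin N → Fin N → ((Fin d → ℝ) → ℝ))
    (hbound : ∀ n η : Fin N, |φ η n (v n)| ≤ Gmax * ‖v n‖)
    (hsupp : ∀ n η : Fin N, ((η : ℕ) < (n : ℕ) ∨ (n : ℕ) + K ≤ (η : ℕ)) → φ η n (v n) = 0) :
    |(1 / (N : ℝ)) * ∑ n : Fin N, ∑ η : Fin N, φ η n (v n)|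
      ≤ (K : ℝ) * Gmax
        * (Finset.univ.sup' (Finset.univ_nonempty_iff.mpr ⟨⟨0, hN⟩⟩) fun n : Fin N => ‖v n‖) :=
  global_error_bounded_by_local_truncation_error_general d N hN K Gmax hG v φ hbound hsupp
end
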